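/- arXiv:2501.06285 — 3 statements merged into one kernel-verified Lean document; each statement's English description precedes it below -/
import Mathlib

section
/- Let S and T be F-inverse monoids with maximal group images S/σ and T/σ. In the free product group S/σ * T/σ, writing each element uniquely as an alternating word g₁⋯gₙ in nontrivial elements of the two factors, the map φ(g₁⋯gₙ) = g₁^m ⋯ gₙ^m (product of the maxima of the σ-classes, computed in the free product M = S * T of inverse monoids) is a premorphism from S/σ * T/σ to M with σ ∘ φ = id. -/
/-!
Every element of `GS * GT` has a unique reduced word, and `φ` evaluates that word letter by letter
through the maps `g ↦ g^m` of the factors. These are premorphisms: `g^m h^m` lies in the σ-class of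
`g h`, hence below its maximum, and `(g^m)⁻¹ = (g⁻¹)^m`. Multiplying a reduced word by a letter
either appends the letter or merges it into the last one, and in both cases the image of the
product lies above the product of the images in the natural order. As the natural order is
compatible with multiplication, induction over the second word gives `φ q φ r ≤ φ (q r)`; and the
reduced word of `q⁻¹` is the reversed word of inverted letters, whence `φ q⁻¹ = (φ q)⁻¹`.
-/

structure IsInverseOperation {M : Type*} [Monoid M] (inv : M → M) : Prop where
  mul_inv_mul : ∀ s, s * inv s * s = s
  inv_mul_inv : ∀ s, inv s * s * inv s = inv s
  eq_inv : ∀ s t, s * t * s = s → t * s * t = t → t = inv s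

/-- The natural partial order `a ≤ b` of an inverse monoid. -/
def NaturalLE {M : Type*} [Monoid M] (a b : M) : Prop :=
  ∃ e, IsIdempotentElem e ∧ a = b * e

namespace IsInverseOperation

variable {M : Type*} [Monoid M] {inv : M → M}

theorem inv_inv (h : IsInverseOperation inv) (s : M) : inv (inv s) = s :=
  (h.eq_inv (inv s) s (h.inv_mul_inv s) (h.mul_inv_mul s)).symm

theorem inv_eq_self (h : IsInverseOperation inv) {e : M} (he : IsIdempotentElem e) :
    inv e = e :=
  (h.eq_inv e e (by rw [he.eq, he.eq]) (by rw [he.eq, he.eq])).symm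

theorem isIdempotentElem_mul_inv (h : IsInverseOperation inv) (s : M) :
    IsIdempotentElem (s * inv s) := by
  rw [IsIdempotentElem, ← mul_assoc, h.mul_inv_mul]

theorem isIdempotentElem_inv_mul (h : IsInverseOperation inv) (s : M) :
    IsIdempotentElem (inv s * s) := by
  rw [IsIdempotentElem, ← mul_assoc, h.inv_mul_inv]

/-- With `a = inv (e * f)`, the element `f * a * e` is also an inverse of `e * f`, hence equals
`a`; this makes `a`, and therefore `e * f = inv a`, idempotent. -/
theorem isIdempotentElem_mul (h : IsInverseOperation inv) {e f : M} (he : IsIdempotentElem e)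
    (hf : IsIdempotentElem f) : IsIdempotentElem (e * f) := by
  set a := inv (e * f)
  have h₁ : e * (f * (a * (e * f))) = e * f := by simpa only [mul_assoc] using h.mul_inv_mul (e * f)
  have h₂ : ∀ x, a * (e * (f * (a * x))) = a * x := fun x => by
    simpa only [mul_assoc] using congrArg (· * x) (h.inv_mul_inv (e * f))
  have hfae : f * a * e = a := h.eq_inv (e * f) (f * a * e)
    (by simp only [mul_assoc]; rw [hf.mul_self_mul, he.mul_self_mul, h₁])
    (by simp only [mul_assoc]; rw [he.mul_self_mul, hf.mul_self_mul, h₂])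
  have ha : IsIdempotentElem a := by
    rw [IsIdempotentElem, ← hfae]; simp only [mul_assoc]; rw [h₂]
  rw [← h.inv_inv (e * f), h.inv_eq_self ha]
  exact ha

theorem isIdempotentElem_commute (h : IsInverseOperation inv) {e f : M} (he : IsIdempotentElem e)
    (hf : IsIdempotentElem f) : e * f = f * e := by
  have hef := h.isIdempotentElem_mul he hf
  have hfe := h.isIdempotentElem_mul hf he
  refine (h.inv_eq_self hef).symm.trans (h.eq_inv _ _ ?_ ?_).symm
  · simp only [mul_assoc]; rw [hf.mul_self_mul, he.mul_self_mul]
    simpa only [mul_assoc] using hef.eq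
  · simp only [mul_assoc]; rw [he.mul_self_mul, hf.mul_self_mul]
    simpa only [mul_assoc] using hfe.eq

theorem inv_mul (h : IsInverseOperation inv) (a b : M) : inv (a * b) = inv b * inv a := by
  have comm : ∀ x, b * (inv b * (inv a * (a * x))) = inv a * (a * (b * (inv b * x))) := fun x => by
    simpa only [mul_assoc] using
      congrArg (· * x) (h.isIdempotentElem_commute (h.isIdempotentElem_mul_inv b)
        (h.isIdempotentElem_inv_mul a))
  refine (h.eq_inv _ _ ?_ ?_).symm
  · simp only [mul_assoc]
    rw [comm, ← mul_assoc b, h.mul_inv_mul, ← mul_assoc a, ← mul_assoc, h.mul_inv_mul]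
  · simp only [mul_assoc]
    rw [← comm, ← mul_assoc (inv a), h.inv_mul_inv, ← mul_assoc (inv b), ← mul_assoc,
      h.inv_mul_inv]

theorem map_inv {G : Type*} [Group G] (h : IsInverseOperation inv) (π : M →* G) (s : M) :
    π (inv s) = (π s)⁻¹ := by
  have := congrArg π (h.mul_inv_mul s)
  rwa [map_mul, map_mul, mul_eq_right, mul_eq_one_iff_eq_inv'] at this

end IsInverseOperation

namespace NaturalLE

variable {M N : Type*} [Monoid M] [Monoid N] {inv : M → M} {a b c : M}

theorem refl (a : M) : NaturalLE a a := ⟨1, .one, (mul_one a).symm⟩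

theorem trans (hab : NaturalLE a b) (h : IsInverseOperation inv) (hbc : NaturalLE b c) :
    NaturalLE a c := by
  obtain ⟨e, he, rfl⟩ := hab
  obtain ⟨f, hf, rfl⟩ := hbc
  exact ⟨f * e, h.isIdempotentElem_mul hf he, mul_assoc c f e⟩

theorem mul_left (hab : NaturalLE a b) (c : M) : NaturalLE (c * a) (c * b) := by
  obtain ⟨e, he, rfl⟩ := hab
  exact ⟨e, he, (mul_assoc c b e).symm⟩

/-- `e * c = c * (inv c * e * c)`, because the idempotents `e` and `c * inv c` commute. -/
theorem mul_right (hab : NaturalLE a b) (h : IsInverseOperation inv) (c : M) :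
    NaturalLE (a * c) (b * c) := by
  obtain ⟨e, he, rfl⟩ := hab
  have hec : e * c = c * (inv c * e * c) := by
    rw [← mul_assoc, ← mul_assoc, h.isIdempotentElem_commute (h.isIdempotentElem_mul_inv c) he,
      mul_assoc e, h.mul_inv_mul]
  refine ⟨inv c * e * c, ?_, by rw [mul_assoc b, hec, ← mul_assoc]⟩
  calc inv c * e * c * (inv c * e * c) = inv c * e * (c * (inv c * e * c)) := by
        simp only [mul_assoc]
    _ = inv c * e * c := by rw [← hec, ← mul_assoc, mul_assoc (inv c) e e, he.eq]

theorem map (hab : NaturalLE a b) (f : M →* N) : NaturalLE (f a) (f b) := by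
  obtain ⟨e, he, rfl⟩ := hab
  exact ⟨f e, he.map f, map_mul f b e⟩

end NaturalLE

structure IsPremorphism {G M : Type*} [Group G] [Monoid M] (inv : M → M) (φ : G → M) : Prop where
  map_one : φ 1 = 1
  map_inv : ∀ g, φ g⁻¹ = inv (φ g)
  map_mul_le : ∀ g h, NaturalLE (φ g * φ h) (φ (g * h))

theorem IsPremorphism.monoidHom_comp {G S M : Type*} [Group G] [Monoid S] [Monoid M]
    {invS : S → S} {invM : M → M} {φ : G → S} (hφ : IsPremorphism invS φ) (f : S →* M)
    (hf : ∀ s, f (invS s) = invM (f s)) : IsPremorphism invM (fun g => f (φ g)) where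
  map_one := by rw [hφ.map_one, f.map_one]
  map_inv g := by rw [hφ.map_inv, hf]
  map_mul_le g h := by simpa only [map_mul] using (hφ.map_mul_le g h).map f

section SigmaMax

-- The hypotheses `hm` and `hle` say that `m g` is the greatest element of the σ-class `π⁻¹(g)`.
variable {S G : Type*} [Monoid S] [Group G] {π : S →* G} {m : G → S}

theorem sigmaMax_one (hle : ∀ g s, π s = g → NaturalLE s (m g)) : m 1 = 1 := by
  obtain ⟨e, he, h1⟩ := hle 1 1 π.map_one
  have he1 : e = 1 :=
    calc e = 1 * e := (one_mul e).symm
      _ = m 1 * e * e := by rw [← h1]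
      _ = m 1 * e := by rw [mul_assoc, he.eq]
      _ = 1 := h1.symm
  rwa [he1, mul_one, eq_comm] at h1

theorem sigmaMax_inv {inv : S → S} (h : IsInverseOperation inv) (hm : ∀ g, π (m g) = g)
    (hle : ∀ g s, π s = g → NaturalLE s (m g)) (g : G) : m g⁻¹ = inv (m g) := by
  obtain ⟨e, -, hx⟩ := hle g⁻¹ (inv (m g)) (by rw [h.map_inv, hm])
  obtain ⟨f, hf, hy⟩ := hle g (inv (m g⁻¹)) (by rw [h.map_inv, hm, inv_inv])
  have h₁ : m g⁻¹ = f * inv (m g) := by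
    rw [← h.inv_inv (m g⁻¹), hy, h.inv_mul, h.inv_eq_self hf]
  have h₂ : f * m g⁻¹ = m g⁻¹ := by rw [h₁, hf.mul_self_mul]
  calc m g⁻¹ = f * inv (m g) := h₁
    _ = f * m g⁻¹ * e := by rw [hx, mul_assoc]
    _ = inv (m g) := by rw [h₂, ← hx]

theorem isPremorphism_sigmaMax {inv : S → S} (h : IsInverseOperation inv)
    (hm : ∀ g, π (m g) = g) (hle : ∀ g s, π s = g → NaturalLE s (m g)) :
    IsPremorphism inv m where
  map_one := sigmaMax_one hle
  map_inv := sigmaMax_inv h hm hle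
  map_mul_le g g' := hle _ _ (by rw [map_mul, hm, hm])

end SigmaMax

section Words

variable {A B X : Type*}

def IsReducedWord [One A] [One B] (L : List (A ⊕ B)) : Prop :=
  L.IsChain (fun x y => x.isLeft ≠ y.isLeft) ∧ ∀ x ∈ L, x ≠ Sum.inl 1 ∧ x ≠ Sum.inr 1

def wordProd [Monoid X] (f : A → X) (g : B → X) (L : List (A ⊕ B)) : X :=
  (L.map (Sum.elim f g)).prod

namespace IsReducedWord

variable [One A] [One B] {L : List (A ⊕ B)} {x y : A ⊕ B}

theorem nil : IsReducedWord ([] : List (A ⊕ B)) := ⟨List.isChain_nil, by simp⟩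

theorem append_singleton_iff :
    IsReducedWord (L ++ [x]) ↔
      IsReducedWord L ∧ (∀ y ∈ L.getLast?, y.isLeft ≠ x.isLeft) ∧
        x ≠ Sum.inl 1 ∧ x ≠ Sum.inr 1 := by
  simp only [IsReducedWord, List.isChain_append, List.isChain_singleton, List.head?_cons,
    Option.mem_some_iff, List.mem_append, List.mem_singleton, or_imp, forall_and, forall_eq,
    forall_eq', true_and]
  tauto

theorem append_singleton_of_isLeft_ne (h : IsReducedWord (L ++ [y])) (hyx : y.isLeft ≠ x.isLeft)
    (hx : x ≠ Sum.inl 1 ∧ x ≠ Sum.inr 1) : IsReducedWord (L ++ [y] ++ [x]) :=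
  append_singleton_iff.2 ⟨h, by simpa using hyx, hx⟩

theorem replace_last (h : IsReducedWord (L ++ [y])) (hyx : y.isLeft = x.isLeft)
    (hx : x ≠ Sum.inl 1 ∧ x ≠ Sum.inr 1) : IsReducedWord (L ++ [x]) :=
  have h := append_singleton_iff.1 h
  append_singleton_iff.2 ⟨h.1, hyx ▸ h.2.1, hx⟩

end IsReducedWord

theorem IsReducedWord.reverse_map_inv [Group A] [Group B] {L : List (A ⊕ B)}
    (h : IsReducedWord L) : IsReducedWord (L.map (Sum.map (·⁻¹) (·⁻¹))).reverse := by
  refine ⟨?_, ?_⟩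
  · simpa [List.isChain_reverse, List.isChain_map, ne_comm] using h.1
  · simp only [List.mem_reverse, List.mem_map]
    rintro _ ⟨(a | a), ha, rfl⟩ <;> simpa using h.2 _ ha

section WordProd

variable [Monoid X] (f : A → X) (g : B → X)

@[simp] theorem wordProd_nil : wordProd f g [] = 1 := rfl

@[simp] theorem wordProd_cons (x : A ⊕ B) (L : List (A ⊕ B)) :
    wordProd f g (x :: L) = Sum.elim f g x * wordProd f g L := List.prod_cons

@[simp] theorem wordProd_append (L L' : List (A ⊕ B)) :
    wordProd f g (L ++ L') = wordProd f g L * wordProd f g L' := by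
  simp [wordProd]

theorem wordProd_append_singleton (L : List (A ⊕ B)) (x : A ⊕ B) :
    wordProd f g (L ++ [x]) = wordProd f g L * Sum.elim f g x := by
  simp

theorem MonoidHom.map_wordProd {Y : Type*} [Monoid Y] (π : X →* Y) (L : List (A ⊕ B)) :
    π (wordProd f g L) = wordProd (fun a => π (f a)) (fun b => π (g b)) L := by
  induction L with
  | nil => simp
  | cons x L ih => rcases x with a | b <;> simp [ih]

theorem wordProd_reverse_map_inv [Inv A] [Inv B] {inv : X → X} (inv_one : inv 1 = 1)
    (inv_mul : ∀ a b, inv (a * b) = inv b * inv a) (hf : ∀ a, f a⁻¹ = inv (f a))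
    (hg : ∀ b, g b⁻¹ = inv (g b)) (L : List (A ⊕ B)) :
    wordProd f g (L.map (Sum.map (·⁻¹) (·⁻¹))).reverse = inv (wordProd f g L) := by
  induction L with
  | nil => simp [inv_one]
  | cons x L ih => rcases x with a | b <;> simp [ih, inv_mul, hf, hg]

end WordProd

end Words

section FreeProduct

variable {GS GT Q M : Type*} [Group GS] [Group GT] [Group Q] [Monoid M] {invM : M → M}
  {jS : GS →* Q} {jT : GT →* Q} {φS : GS → M} {φT : GT → M}

theorem exists_letter_mul_le (hφS : IsPremorphism invM φS) (hφT : IsPremorphism invM φT)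
    {x y : GS ⊕ GT} (hyx : y.isLeft = x.isLeft) :
    ∃ z : GS ⊕ GT, z.isLeft = y.isLeft ∧
      Sum.elim jS jT z = Sum.elim jS jT y * Sum.elim jS jT x ∧
      NaturalLE (Sum.elim φS φT y * Sum.elim φS φT x) (Sum.elim φS φT z) := by
  rcases y with a | a <;> rcases x with g | g <;> simp only [Sum.isLeft_inl, Sum.isLeft_inr,
    reduceCtorEq] at hyx
  · exact ⟨.inl (a * g), rfl, map_mul jS a g, hφS.map_mul_le a g⟩
  · exact ⟨.inr (a * g), rfl, map_mul jT a g, hφT.map_mul_le a g⟩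

structure IsNormalForm (jS : GS →* Q) (jT : GT →* Q) (rep : Q → List (GS ⊕ GT)) : Prop where
  reduced : ∀ q, IsReducedWord (rep q)
  wordProd_rep : ∀ q, wordProd jS jT (rep q) = q
  rep_wordProd : ∀ L, IsReducedWord L → rep (wordProd jS jT L) = L

variable {rep : Q → List (GS ⊕ GT)}

theorem IsNormalForm.rep_mul_of_isLeft_eq (hrep : IsNormalForm jS jT rep)
    (hφS : IsPremorphism invM φS) (hφT : IsPremorphism invM φT) {L : List (GS ⊕ GT)}
    {y z : GS ⊕ GT} (hL : IsReducedWord (L ++ [y])) (hyz : y.isLeft = z.isLeft) :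
    wordProd φS φT (rep (wordProd jS jT L * Sum.elim jS jT z)) =
      wordProd φS φT L * Sum.elim φS φT z := by
  by_cases hz : z ≠ Sum.inl 1 ∧ z ≠ Sum.inr 1
  · have := hrep.rep_wordProd _ (hL.replace_last hyz hz)
    rw [wordProd_append_singleton] at this
    rw [this, wordProd_append_singleton]
  · have hL' := (IsReducedWord.append_singleton_iff.1 hL).1
    rw [not_and_or, not_ne_iff, not_ne_iff] at hz
    rcases hz with rfl | rfl <;> simp [hφS.map_one, hφT.map_one, hrep.rep_wordProd L hL']

theorem IsNormalForm.rep_mul_letter_le (hrep : IsNormalForm jS jT rep)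
    (hφS : IsPremorphism invM φS) (hφT : IsPremorphism invM φT) (q : Q) (x : GS ⊕ GT) :
    NaturalLE (wordProd φS φT (rep q) * Sum.elim φS φT x)
      (wordProd φS φT (rep (q * Sum.elim jS jT x))) := by
  by_cases hx : x ≠ Sum.inl 1 ∧ x ≠ Sum.inr 1
  swap
  · rw [not_and_or, not_ne_iff, not_ne_iff] at hx
    rcases hx with rfl | rfl <;> simpa [hφS.map_one, hφT.map_one] using NaturalLE.refl _
  have extend (h : IsReducedWord (rep q ++ [x])) : NaturalLE
      (wordProd φS φT (rep q) * Sum.elim φS φT x) (wordProd φS φT (rep (q * Sum.elim jS jT x))) := by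
    have hqx := hrep.rep_wordProd _ h
    rw [wordProd_append_singleton, hrep.wordProd_rep] at hqx
    rw [hqx, wordProd_append_singleton]
    exact .refl _
  rcases List.eq_nil_or_concat (rep q) with hq | ⟨L, y, hq⟩
  · exact extend (by rw [hq]; exact IsReducedWord.append_singleton_iff.2 ⟨.nil, by simp, hx⟩)
  rw [List.concat_eq_append] at hq
  have hL : IsReducedWord (L ++ [y]) := hq ▸ hrep.reduced q
  by_cases hyx : y.isLeft = x.isLeft
  swap
  · exact extend (by rw [hq]; exact hL.append_singleton_of_isLeft_ne hyx hx)
  obtain ⟨z, hzy, hz, hle⟩ := exists_letter_mul_le (jS := jS) (jT := jT) hφS hφT hyx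
  have hqx : q * Sum.elim jS jT x = wordProd jS jT L * Sum.elim jS jT z := by
    rw [hz, ← mul_assoc, ← hrep.wordProd_rep q, hq, wordProd_append_singleton]
  rw [hqx, hrep.rep_mul_of_isLeft_eq hφS hφT hL hzy.symm, hq, wordProd_append_singleton, mul_assoc]
  exact hle.mul_left _

theorem IsNormalForm.rep_mul_wordProd_le (hrep : IsNormalForm jS jT rep)
    (hM : IsInverseOperation invM) (hφS : IsPremorphism invM φS) (hφT : IsPremorphism invM φT)
    (L : List (GS ⊕ GT)) (q : Q) :
    NaturalLE (wordProd φS φT (rep q) * wordProd φS φT L)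
      (wordProd φS φT (rep (q * wordProd jS jT L))) := by
  induction L generalizing q with
  | nil => simpa using NaturalLE.refl _
  | cons x L ih =>
    rw [wordProd_cons, wordProd_cons, ← mul_assoc, ← mul_assoc]
    exact ((hrep.rep_mul_letter_le hφS hφT q x).mul_right hM _).trans hM (ih _)

theorem IsNormalForm.isPremorphism_wordProd_rep (hrep : IsNormalForm jS jT rep)
    (hM : IsInverseOperation invM) (hφS : IsPremorphism invM φS) (hφT : IsPremorphism invM φT) :
    IsPremorphism invM (fun q => wordProd φS φT (rep q)) where
  map_one := by rw [← wordProd_nil jS jT, hrep.rep_wordProd _ .nil, wordProd_nil]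
  map_inv q := by
    have hinv := wordProd_reverse_map_inv jS jT inv_one mul_inv_rev (map_inv jS) (map_inv jT)
      (rep q)
    rw [hrep.wordProd_rep] at hinv
    rw [← hinv, hrep.rep_wordProd _ (hrep.reduced q).reverse_map_inv,
      wordProd_reverse_map_inv φS φT (hM.inv_eq_self .one) hM.inv_mul hφS.map_inv hφT.map_inv]
  map_mul_le q r := by
    simpa only [hrep.wordProd_rep] using hrep.rep_mul_wordProd_le hM hφS hφT (rep r) q

end FreeProduct

theorem stmt14_general {S T M GS GT Q : Type} [Monoid S] [Monoid T] [Monoid M]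
    [Group GS] [Group GT] [Group Q]
    (invS : S → S) (invT : T → T) (invM : M → M)
    (hS1 : ∀ s, s * invS s * s = s) (hS2 : ∀ s, invS s * s * invS s = invS s)
    (hSu : ∀ s t, s * t * s = s → t * s * t = t → t = invS s)
    (hT1 : ∀ s, s * invT s * s = s) (hT2 : ∀ s, invT s * s * invT s = invT s)
    (hTu : ∀ s t, s * t * s = s → t * s * t = t → t = invT s)
    (hM1 : ∀ s, s * invM s * s = s) (hM2 : ∀ s, invM s * s * invM s = invM s)
    (hMu : ∀ s t, s * t * s = s → t * s * t = t → t = invM s)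
    -- maximal group images
    (πS : S →* GS) (πT : T →* GT) (π : M →* Q)
    -- the factor inclusions into the free product M, preserving inverses
    (ιS : S →* M) (ιT : T →* M)
    (hιSinv : ∀ s, ιS (invS s) = invM (ιS s)) (hιTinv : ∀ t, ιT (invT t) = invM (ιT t))
    -- the induced inclusions of the factor groups into Q, compatible with π
    (jS : GS →* Q) (jT : GT →* Q)
    (hcommS : ∀ s, π (ιS s) = jS (πS s)) (hcommT : ∀ t, π (ιT t) = jT (πT t))
    -- F-inverse structure: maxima of σ-classes
    (mS : GS → S) (mT : GT → T)
    (hmS1 : ∀ g, πS (mS g) = g)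
    (hmS2 : ∀ (g : GS) (s : S), πS s = g → ∃ e : S, e * e = e ∧ s = mS g * e)
    (hmT1 : ∀ g, πT (mT g) = g)
    (hmT2 : ∀ (g : GT) (t : T), πT t = g → ∃ e : T, e * e = e ∧ t = mT g * e)
    -- alternating words in nontrivial elements of the two factor groups
    (Alt : List (GS ⊕ GT) → Prop)
    (hAlt : ∀ L, Alt L ↔ (L.Chain' fun a b => a.isLeft ≠ b.isLeft) ∧
      ∀ x ∈ L, x ≠ Sum.inl 1 ∧ x ≠ Sum.inr 1)
    -- unique alternating representation of elements of Q = GS * GT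
    (huniqrep : ∀ q : Q, ∃! L : List (GS ⊕ GT),
      Alt L ∧ (L.map (Sum.elim (⇑jS) (⇑jT))).prod = q) :
    ∃ φ : Q → M,
      (∀ L : List (GS ⊕ GT), Alt L →
        φ ((L.map (Sum.elim (⇑jS) (⇑jT))).prod) =
          (L.map (Sum.elim (fun g => ιS (mS g)) (fun g => ιT (mT g)))).prod) ∧
      φ 1 = 1 ∧
      (∀ q : Q, φ q⁻¹ = invM (φ q)) ∧
      (∀ q r : Q, ∃ e : M, e * e = e ∧ φ q * φ r = φ (q * r) * e) ∧
      (∀ q : Q, π (φ q) = q) := by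
  obtain rfl : Alt = IsReducedWord := funext fun L => propext (hAlt L)
  choose rep hrep using huniqrep
  have hnf : IsNormalForm jS jT rep :=
    ⟨fun q => (hrep q).1.1, fun q => (hrep q).1.2, fun L hL => ((hrep _).2 L ⟨hL, rfl⟩).symm⟩
  have hφS := (isPremorphism_sigmaMax ⟨hS1, hS2, hSu⟩ hmS1 hmS2).monoidHom_comp ιS hιSinv
  have hφT := (isPremorphism_sigmaMax ⟨hT1, hT2, hTu⟩ hmT1 hmT2).monoidHom_comp ιT hιTinv
  have hφ := hnf.isPremorphism_wordProd_rep ⟨hM1, hM2, hMu⟩ hφS hφT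
  refine ⟨fun q => wordProd _ _ (rep q), fun L hL => congrArg _ (hnf.rep_wordProd L hL),
    hφ.map_one, hφ.map_inv, hφ.map_mul_le, fun q => ?_⟩
  rw [π.map_wordProd]
  simp only [hcommS, hcommT, hmS1, hmT1]
  exact hnf.wordProd_rep q

/-- Free products of F-inverse monoids: with `M` the free product of the F-inverse
monoids `S` and `T` (with maximal group images `GS`, `GT` and `Q = GS * GT` the
maximal group image of `M`, in which every element has a unique alternating
representation), the map sending an alternating word `g₁ ⋯ gₙ` to the product
`g₁^m ⋯ gₙ^m` of the maxima of the σ-classes is a premorphism `φ : Q → M` with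
`σ ∘ φ = id`. -/
theorem stmt14 {S T M GS GT Q : Type} [Monoid S] [Monoid T] [Monoid M]
    [Group GS] [Group GT] [Group Q]
    (invS : S → S) (invT : T → T) (invM : M → M)
    (hS1 : ∀ s, s * invS s * s = s) (hS2 : ∀ s, invS s * s * invS s = invS s)
    (hSu : ∀ s t, s * t * s = s → t * s * t = t → t = invS s)
    (hT1 : ∀ s, s * invT s * s = s) (hT2 : ∀ s, invT s * s * invT s = invT s)
    (hTu : ∀ s t, s * t * s = s → t * s * t = t → t = invT s)
    (hM1 : ∀ s, s * invM s * s = s) (hM2 : ∀ s, invM s * s * invM s = invM s)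
    (hMu : ∀ s t, s * t * s = s → t * s * t = t → t = invM s)
    -- maximal group images
    (πS : S →* GS) (πT : T →* GT) (π : M →* Q)
    (hπSuniv : ∀ (H : Type) [Group H] (f : S →* H), ∃ f' : GS →* H, ∀ s, f' (πS s) = f s)
    (hπTuniv : ∀ (H : Type) [Group H] (f : T →* H), ∃ f' : GT →* H, ∀ t, f' (πT t) = f t)
    (hπuniv : ∀ (H : Type) [Group H] (f : M →* H), ∃ f' : Q →* H, ∀ x, f' (π x) = f x)
    -- the factor inclusions into the free product M, preserving inverses
    (ιS : S →* M) (ιT : T →* M)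
    (hιSinv : ∀ s, ιS (invS s) = invM (ιS s)) (hιTinv : ∀ t, ιT (invT t) = invM (ιT t))
    -- the induced inclusions of the factor groups into Q, compatible with π
    (jS : GS →* Q) (jT : GT →* Q)
    (hcommS : ∀ s, π (ιS s) = jS (πS s)) (hcommT : ∀ t, π (ιT t) = jT (πT t))
    -- F-inverse structure: maxima of σ-classes
    (mS : GS → S) (mT : GT → T)
    (hmS1 : ∀ g, πS (mS g) = g)
    (hmS2 : ∀ (g : GS) (s : S), πS s = g → ∃ e : S, e * e = e ∧ s = mS g * e)
    (hmT1 : ∀ g, πT (mT g) = g)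
    (hmT2 : ∀ (g : GT) (t : T), πT t = g → ∃ e : T, e * e = e ∧ t = mT g * e)
    -- alternating words in nontrivial elements of the two factor groups
    (Alt : List (GS ⊕ GT) → Prop)
    (hAlt : ∀ L, Alt L ↔ (L.Chain' fun a b => a.isLeft ≠ b.isLeft) ∧
      ∀ x ∈ L, x ≠ Sum.inl 1 ∧ x ≠ Sum.inr 1)
    -- unique alternating representation of elements of Q = GS * GT
    (huniqrep : ∀ q : Q, ∃! L : List (GS ⊕ GT),
      Alt L ∧ (L.map (Sum.elim (⇑jS) (⇑jT))).prod = q) :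
    ∃ φ : Q → M,
      (∀ L : List (GS ⊕ GT), Alt L →
        φ ((L.map (Sum.elim (⇑jS) (⇑jT))).prod) =
          (L.map (Sum.elim (fun g => ιS (mS g)) (fun g => ιT (mT g)))).prod) ∧
      φ 1 = 1 ∧
      (∀ q : Q, φ q⁻¹ = invM (φ q)) ∧
      (∀ q r : Q, ∃ e : M, e * e = e ∧ φ q * φ r = φ (q * r) * e) ∧
      (∀ q : Q, π (φ q) = q) :=
  stmt14_general invS invT invM hS1 hS2 hSu hT1 hT2 hTu hM1 hM2 hMu πS πT π ιS ιT hιSinv hιTinv jS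
    jT hcommS hcommT mS mT hmS1 hmS2 hmT1 hmT2 Alt hAlt huniqrep
end

section
/- Let S be an inverse semigroup in which every σ-class contains only finitely many maximal non-idempotent elements and every ascending chain of non-idempotent elements is bounded above, equipped with a proper length function l_S, and let l_G be a length function on G = S/σ such that balls { g : l_G(g) ≤ r } are finite. Then there exists a function φ : [0,∞) → [0,∞) such that l_S(s) ≤ φ(l_G(σ(s))) for all s ∈ S. -/
open scoped NNReal

/-!
Every non-idempotent `s` lies, by Zorn's lemma applied to the natural partial order on the
non-idempotents (chains are bounded above, and an upper bound of a non-idempotent is again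
non-idempotent), below a maximal non-idempotent `m` of its σ-class, and `l_S s ≤ l_S m` by
monotonicity. Only finitely many such `m` lie over each of the finitely many `g` with
`l_G g ≤ ρ`, so `φ ρ` can be taken to be the largest of their lengths.
-/

namespace InverseSemigroup

variable {S : Type*} [Semigroup S]

/-- `inv` picks the unique inverse of every element, i.e. it makes `S` an inverse semigroup. -/
structure IsInverseOp (inv : S → S) : Prop where
  mul_inv_mul : ∀ s, s * inv s * s = s
  inv_mul_inv : ∀ s, inv s * s * inv s = inv s
  eq_inv_of_mul_mul : ∀ s t, s * t * s = s → t * s * t = t → t = inv s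

def NatLE (s t : S) : Prop := ∃ e : S, IsIdempotentElem e ∧ s = t * e

variable {inv : S → S}

theorem IsInverseOp.inv_eq_self_of_isIdempotentElem (h : IsInverseOp inv) {e : S}
    (he : IsIdempotentElem e) : inv e = e :=
  (h.eq_inv_of_mul_mul e e (by rw [he, he]) (by rw [he, he])).symm

theorem IsInverseOp.isIdempotentElem_mul (h : IsInverseOp inv) {e f : S}
    (he : IsIdempotentElem e) (hf : IsIdempotentElem f) : IsIdempotentElem (e * f) := by
  set x := inv (e * f)
  -- `f x e` is an inverse of `e f`, hence equals `x`; so `x` is idempotent and `e f = inv x = x`.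
  have hx : f * x * e = x := by
    refine h.eq_inv_of_mul_mul (e * f) (f * x * e) ?_ ?_
    · calc e * f * (f * x * e) * (e * f) = e * (f * f) * x * (e * e) * f := by
            simp only [mul_assoc]
        _ = e * f * x * (e * f) := by rw [he.eq, hf.eq]; simp only [mul_assoc]
        _ = e * f := h.mul_inv_mul _
    · calc f * x * e * (e * f) * (f * x * e) = f * ((x * ((e * e) * (f * f)) * x) * e) := by
            simp only [mul_assoc]
        _ = f * x * e := by rw [he.eq, hf.eq, h.inv_mul_inv, mul_assoc]
  have hx_idem : IsIdempotentElem x := by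
    calc x * x = f * ((x * (e * f) * x) * e) := by
          conv_lhs => rw [← hx]
          simp only [mul_assoc]
      _ = x := by rw [h.inv_mul_inv, ← mul_assoc, hx]
  have hef : e * f = x := by
    rw [h.eq_inv_of_mul_mul x (e * f) (h.inv_mul_inv _) (h.mul_inv_mul _),
      h.inv_eq_self_of_isIdempotentElem hx_idem]
  rw [IsIdempotentElem, hef, hx_idem.eq]

theorem IsInverseOp.isIdempotentElem_comm (h : IsInverseOp inv) {e f : S}
    (he : IsIdempotentElem e) (hf : IsIdempotentElem f) : e * f = f * e := by
  -- `f e` is an inverse of the idempotent `e f`, whose only inverse is itself.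
  have hinv : f * e = inv (e * f) := by
    refine h.eq_inv_of_mul_mul (e * f) (f * e) ?_ ?_
    · calc e * f * (f * e) * (e * f) = e * ((f * f) * ((e * e) * f)) := by simp only [mul_assoc]
        _ = e * f := by rw [he.eq, hf.eq, ← mul_assoc, (h.isIdempotentElem_mul he hf).eq]
    · calc f * e * (e * f) * (f * e) = f * ((e * e) * ((f * f) * e)) := by simp only [mul_assoc]
        _ = f * e := by rw [he.eq, hf.eq, ← mul_assoc, (h.isIdempotentElem_mul hf he).eq]
  rw [hinv, h.inv_eq_self_of_isIdempotentElem (h.isIdempotentElem_mul he hf)]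

theorem IsInverseOp.natLE_refl (h : IsInverseOp inv) (s : S) : NatLE s s := by
  refine ⟨inv s * s, ?_, by rw [← mul_assoc, h.mul_inv_mul]⟩
  calc inv s * s * (inv s * s) = inv s * (s * inv s * s) := by simp only [mul_assoc]
    _ = inv s * s := by rw [h.mul_inv_mul]

theorem IsInverseOp.natLE_trans (h : IsInverseOp inv) {s t u : S} :
    NatLE s t → NatLE t u → NatLE s u := by
  rintro ⟨e, he, rfl⟩ ⟨f, hf, rfl⟩
  exact ⟨f * e, h.isIdempotentElem_mul hf he, mul_assoc _ _ _⟩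

theorem IsInverseOp.natLE_antisymm (h : IsInverseOp inv) {s t : S} :
    NatLE s t → NatLE t s → s = t := by
  rintro ⟨e, he, hs⟩ ⟨f, hf, ht⟩
  have htef : t * (e * f) = t := by rw [← mul_assoc, ← hs, ← ht]
  calc s = t * (e * f) * e := by rw [htef, hs]
    _ = t * (e * f) := by
      rw [mul_assoc, mul_assoc, h.isIdempotentElem_comm hf he, ← mul_assoc e, he.eq]
    _ = t := htef

theorem IsInverseOp.isIdempotentElem_of_natLE (h : IsInverseOp inv) {s t : S} (hst : NatLE s t)
    (ht : IsIdempotentElem t) : IsIdempotentElem s := by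
  obtain ⟨e, he, rfl⟩ := hst
  exact h.isIdempotentElem_mul ht he

theorem map_eq_of_natLE {G : Type*} [Monoid G] {σ : S → G}
    (hσmul : ∀ s t, σ (s * t) = σ s * σ t) (hσE : ∀ e : S, IsIdempotentElem e → σ e = 1)
    {s t : S} (hst : NatLE s t) : σ s = σ t := by
  obtain ⟨e, he, rfl⟩ := hst
  rw [hσmul, hσE e he, mul_one]

theorem IsInverseOp.exists_maximal_natLE (h : IsInverseOp inv)
    (hchain : ∀ C : Set S, C.Nonempty → (∀ x ∈ C, ¬IsIdempotentElem x) →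
      IsChain NatLE C → ∃ ub : S, ∀ x ∈ C, NatLE x ub)
    {s : S} (hs : ¬IsIdempotentElem s) :
    ∃ m, NatLE s m ∧ ¬IsIdempotentElem m ∧ ∀ t, NatLE m t → ¬IsIdempotentElem t → t = m := by
  let : Preorder S :=
    { le := NatLE, le_refl := h.natLE_refl, le_trans := fun _ _ _ => h.natLE_trans }
  obtain ⟨m, hsm, hm, hmax⟩ := zorn_le_nonempty₀ {t : S | ¬IsIdempotentElem t}
    (fun c hc hchain_c y hy => by
      obtain ⟨ub, hub⟩ := hchain c ⟨y, hy⟩ hc hchain_c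
      exact ⟨ub, fun hidem => hc hy (h.isIdempotentElem_of_natLE (hub y hy) hidem), hub⟩)
    s hs
  exact ⟨m, hsm, hm, fun t hmt ht => h.natLE_antisymm (hmax ht hmt) hmt⟩

end InverseSemigroup

theorem stmt18_general {S G : Type*} [Semigroup S] [Group G] (inv : S → S)
    (hinv1 : ∀ s, s * inv s * s = s)
    (hinv2 : ∀ s, inv s * s * inv s = inv s)
    (huniq : ∀ s t, s * t * s = s → t * s * t = t → t = inv s)
    (σ : S → G) (hσmul : ∀ s t, σ (s * t) = σ s * σ t)
    (hσE : ∀ e : S, e * e = e → σ e = 1)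
    (lS : S → ℝ≥0)
    (hlS0 : ∀ s, lS s = 0 ↔ s * s = s)
    (hlSmono : ∀ s t : S, (∃ e : S, e * e = e ∧ s = t * e) → lS s ≤ lS t)
    (lG : G → ℝ≥0) (hlGball : ∀ r : ℝ≥0, {g : G | lG g ≤ r}.Finite)
    (hmaxfin : ∀ g : G, {m : S | σ m = g ∧ m * m ≠ m ∧
      ∀ t : S, σ t = g → (∃ e : S, e * e = e ∧ m = t * e) → t * t ≠ t → t = m}.Finite)
    (hchain : ∀ C : Set S, C.Nonempty → (∀ x ∈ C, x * x ≠ x) →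
      IsChain (fun s t : S => ∃ e : S, e * e = e ∧ s = t * e) C →
      ∃ ub : S, ∀ x ∈ C, ∃ e : S, e * e = e ∧ x = ub * e) :
    ∃ φ : ℝ≥0 → ℝ≥0, ∀ s : S, lS s ≤ φ (lG (σ s)) := by
  have h : InverseSemigroup.IsInverseOp inv := ⟨hinv1, hinv2, huniq⟩
  refine ⟨fun ρ => (hlGball ρ).toFinset.sup fun g => (hmaxfin g).toFinset.sup lS, fun s => ?_⟩
  by_cases hs : s * s = s
  · simp [(hlS0 s).2 hs]
  obtain ⟨m, hsm, hm, hmax⟩ := h.exists_maximal_natLE hchain hs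
  have hσm : σ m = σ s := (InverseSemigroup.map_eq_of_natLE hσmul hσE hsm).symm
  calc lS s ≤ lS m := hlSmono s m hsm
    _ ≤ (hmaxfin (σ s)).toFinset.sup lS := Finset.le_sup <|
      Set.Finite.mem_toFinset _ |>.2 ⟨hσm, hm, fun t _ hmt ht => hmax t hmt ht⟩
    _ ≤ _ := Finset.le_sup (f := fun g => (hmaxfin g).toFinset.sup lS) (by simp)

/-- If every σ-class of an inverse semigroup `S` has finitely many maximal
non-idempotent elements and every ascending chain of non-idempotents is bounded
above, then for a proper length function `l_S` on `S` and a length function `l_G`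
with finite balls on the maximal group image `G`, there is a bounding function
`φ` with `l_S(s) ≤ φ(l_G(σ(s)))` for all `s`. -/
theorem stmt18 {S G : Type*} [Semigroup S] [Group G] (inv : S → S)
    (hinv1 : ∀ s, s * inv s * s = s)
    (hinv2 : ∀ s, inv s * s * inv s = inv s)
    (huniq : ∀ s t, s * t * s = s → t * s * t = t → t = inv s)
    (σ : S → G) (hσmul : ∀ s t, σ (s * t) = σ s * σ t)
    (hσsur : Function.Surjective σ)
    (hσE : ∀ e : S, e * e = e → σ e = 1)
    (lS : S → ℝ≥0)
    (hlS0 : ∀ s, lS s = 0 ↔ s * s = s)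
    (hlSinv : ∀ s, lS (inv s) = lS s)
    (hlSsub : ∀ s t, lS (s * t) ≤ lS s + lS t)
    (hlSmono : ∀ s t : S, (∃ e : S, e * e = e ∧ s = t * e) → lS s ≤ lS t)
    (hlSproper : ∀ r : ℝ≥0, ∃ F : Finset S, ∀ s : S, 0 < lS s → lS s ≤ r →
      ∃ f ∈ F, ∃ e : S, e * e = e ∧ s = f * e)
    (lG : G → ℝ≥0) (hlGball : ∀ r : ℝ≥0, {g : G | lG g ≤ r}.Finite)
    (hmaxfin : ∀ g : G, {m : S | σ m = g ∧ m * m ≠ m ∧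
      ∀ t : S, σ t = g → (∃ e : S, e * e = e ∧ m = t * e) → t * t ≠ t → t = m}.Finite)
    (hchain : ∀ C : Set S, C.Nonempty → (∀ x ∈ C, x * x ≠ x) →
      IsChain (fun s t : S => ∃ e : S, e * e = e ∧ s = t * e) C →
      ∃ ub : S, ∀ x ∈ C, ∃ e : S, e * e = e ∧ x = ub * e) :
    ∃ φ : ℝ≥0 → ℝ≥0, ∀ s : S, lS s ≤ φ (lG (σ s)) :=
  stmt18_general inv hinv1 hinv2 huniq σ hσmul hσE lS hlS0 hlSmono lG hlGball hmaxfin hchain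
end

section
/- Let S be an inverse semigroup with proper length function l_S and G = S/σ with length function l_G, and suppose there is φ : [0,∞) → [0,∞) with l_S(s) ≤ φ(l_G(σ(s))) for all s ∈ S. Then every σ-class of S has its set of non-idempotent elements bounded above by a finite set, and every ascending chain of non-idempotent elements of S is bounded above. -/
open scoped NNReal

/-- If an inverse semigroup `S` with proper length function `l_S` has its group
distortion bounded by a function `φ` (i.e. `l_S(s) ≤ φ(l_G(σ(s)))`), then the
non-idempotent elements of every σ-class are bounded above by a finite set, and
every ascending chain of non-idempotents is bounded above. -/
theorem stmt19 {S G : Type*} [Semigroup S] [Group G] (inv : S → S)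
    (hinv1 : ∀ s, s * inv s * s = s)
    (hinv2 : ∀ s, inv s * s * inv s = inv s)
    (huniq : ∀ s t, s * t * s = s → t * s * t = t → t = inv s)
    (σ : S → G) (hσmul : ∀ s t, σ (s * t) = σ s * σ t)
    (hσsur : Function.Surjective σ)
    (hσE : ∀ e : S, e * e = e → σ e = 1)
    (lS : S → ℝ≥0)
    (hlS0 : ∀ s, lS s = 0 ↔ s * s = s)
    (hlSinv : ∀ s, lS (inv s) = lS s)
    (hlSsub : ∀ s t, lS (s * t) ≤ lS s + lS t)
    (hlSproper : ∀ r : ℝ≥0, ∃ F : Finset S, ∀ s : S, 0 < lS s → lS s ≤ r →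
      ∃ f ∈ F, ∃ e : S, e * e = e ∧ s = f * e)
    (lG : G → ℝ≥0)
    (φ : ℝ≥0 → ℝ≥0) (hφ : ∀ s : S, lS s ≤ φ (lG (σ s))) :
    (∀ g : G, ∃ F : Finset S, ∀ s : S, σ s = g → s * s ≠ s →
      ∃ f ∈ F, ∃ e : S, e * e = e ∧ s = f * e) ∧
    (∀ C : Set S, C.Nonempty → (∀ x ∈ C, x * x ≠ x) →
      IsChain (fun s t : S => ∃ e : S, e * e = e ∧ s = t * e) C →
      ∃ ub : S, ∀ x ∈ C, ∃ e : S, e * e = e ∧ x = ub * e) := by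
  classical
  -- idempotents: product of idempotents is idempotent
  have hidem_inv : ∀ e : S, e * e = e → inv e = e := by
    intro e he
    refine (huniq e e ?_ ?_).symm <;> rw [he, he]
  have hprod : ∀ e f : S, e * e = e → f * f = f → (e * f) * (e * f) = e * f := by
    intro e f he hf
    set x := inv (e * f) with hx
    have h1 : e * f * (f * x * e) * (e * f) = e * f := by
      have := hinv1 (e * f)
      calc e * f * (f * x * e) * (e * f)
          = e * ((f * f) * x * ((e * e) * f)) := by simp only [mul_assoc]
        _ = e * (f * x * (e * f)) := by rw [he, hf]
        _ = e * f * x * (e * f) := by simp only [mul_assoc]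
        _ = e * f := hinv1 (e * f)
    have h2 : (f * x * e) * (e * f) * (f * x * e) = f * x * e := by
      calc (f * x * e) * (e * f) * (f * x * e)
          = f * (x * ((e * e) * ((f * f) * (x * e)))) := by simp only [mul_assoc]
        _ = f * (x * (e * (f * (x * e)))) := by rw [he, hf]
        _ = f * (x * (e * f) * x) * e := by simp only [mul_assoc]
        _ = f * (inv (e*f) * (e * f) * inv (e*f)) * e := by rw [hx]
        _ = f * x * e := by rw [hinv2 (e*f)]
    have hkey : f * x * e = x := huniq (e * f) (f * x * e) h1 h2
    have hxid : x * x = x := by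
      conv_lhs => rw [← hkey]
      calc (f * x * e) * (f * x * e)
          = f * (x * (e * f) * (x * e)) := by simp only [mul_assoc]
        _ = f * (x * (e * f) * x * e) := by simp only [mul_assoc]
        _ = f * (inv (e*f) * (e*f) * inv (e*f) * e) := by rw [hx]
        _ = f * (x * e) := by rw [hinv2 (e*f)]
        _ = f * x * e := by rw [mul_assoc]
        _ = x := hkey
    have hef : e * f = x := by
      have := huniq x (e * f) ?_ ?_
      · rw [this, hidem_inv x hxid]
      · rw [hx]; exact hinv2 (e * f)
      · rw [hx]; exact hinv1 (e * f)
    rw [hef]; exact hxid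
  -- the natural partial order
  set r : S → S → Prop := fun s t => ∃ e : S, e * e = e ∧ s = t * e with hr
  have htrans : ∀ {a b c : S}, r a b → r b c → r a c := by
    rintro a b c ⟨e, he, rfl⟩ ⟨f, hf, rfl⟩
    exact ⟨f * e, hprod f e hf he, by rw [mul_assoc]⟩
  have hσmono : ∀ {a b : S}, r a b → σ a = σ b := by
    rintro a b ⟨e, he, rfl⟩
    rw [hσmul, hσE e he, mul_one]
  -- part 1
  have part1 : ∀ g : G, ∃ F : Finset S, ∀ s : S, σ s = g → s * s ≠ s →
      ∃ f ∈ F, ∃ e : S, e * e = e ∧ s = f * e := by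
    intro g
    obtain ⟨F, hF⟩ := hlSproper (φ (lG g))
    refine ⟨F, fun s hsg hs => hF s ?_ ?_⟩
    · exact pos_iff_ne_zero.mpr (fun h => hs ((hlS0 s).mp h))
    · have := hφ s; rwa [hsg] at this
  refine ⟨part1, ?_⟩
  rintro C ⟨x0, hx0⟩ hnid hchain
  have hg : ∀ x ∈ C, σ x = σ x0 := by
    intro x hx
    rcases eq_or_ne x x0 with rfl | hne
    · rfl
    rcases hchain hx hx0 hne with h | h
    · exact hσmono h
    · exact (hσmono h).symm
  obtain ⟨F, hF⟩ := part1 (σ x0)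
  set T : S → Finset S := fun x => F.filter (fun f => r x f) with hT
  have hTne : ∀ x ∈ C, (T x).Nonempty := by
    intro x hx
    obtain ⟨f, hfF, e, he, hxe⟩ := hF x (hg x hx) (hnid x hx)
    exact ⟨f, Finset.mem_filter.mpr ⟨hfF, e, he, hxe⟩⟩
  have hTsub : ∀ {x y : S}, r x y → T y ⊆ T x := by
    intro x y hxy f hf
    rw [Finset.mem_filter] at hf ⊢
    exact ⟨hf.1, htrans hxy hf.2⟩
  -- choose minimizer of card
  set A : Set ℕ := {n | ∃ x ∈ C, (T x).card = n} with hA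
  have hAne : A.Nonempty := ⟨(T x0).card, x0, hx0, rfl⟩
  obtain ⟨xm, hxm, hxmcard⟩ := Nat.sInf_mem hAne
  obtain ⟨f, hf⟩ := hTne xm hxm
  refine ⟨f, ?_⟩
  intro x hx
  rcases eq_or_ne x xm with rfl | hne
  · exact (Finset.mem_filter.mp hf).2
  rcases hchain hx hxm hne with h | h
  · exact htrans h (Finset.mem_filter.mp hf).2
  · -- r xm x, so T x ⊆ T xm, and cards force equality
    have hsub := hTsub h
    have hle : (T xm).card ≤ (T x).card := hxmcard ▸ Nat.sInf_le ⟨x, hx, rfl⟩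
    have heq : T x = T xm := Finset.eq_of_subset_of_card_le hsub hle
    have hfx : f ∈ T x := by rw [heq]; exact hf
    exact (Finset.mem_filter.mp hfx).2
end
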